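/- arXiv:2508.09628 — 3 statements merged into one kernel-verified Lean document; each statement's English description precedes it below -/
import Mathlib

section
/- Let B ⪰ 0 be symmetric positive semidefinite on R^d, K ⊆ R^d compact convex with 0 ∈ K, diam(K) = D, and consider iterates x_0 ∈ K, x_{t+1} = x_t + γ_t (s_t − x_t) where s_t ∈ argmin_{y ∈ K} ⟨Bx_t, y⟩ and γ_t = 2/(t+2). Then for J(x) = ½⟨Bx,x⟩ and all t ≥ 0: J(x_{t+1}) ≤ (2/(t+1)) · λ_max(B) · D². -/
/-!
Because `0 ∈ K`, the linear minimisation step gives `⟪B x_t, s_t⟫ ≤ 0`, so expanding the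
quadratic along the step yields the descent inequality
`⟪B x_{t+1}, x_{t+1}⟫ ≤ (1 - γ_t) ⟪B x_t, x_t⟫ + γ_t² λ_max D²`: here
`⟪B v, v⟫ ≤ λ_max ‖v‖²` by diagonalising `B` in an orthonormal eigenbasis, and
`‖s_t - x_t‖ ≤ D` since the iterates stay in `K` by convexity. For `γ_t = 2 / (t + 2)` this
recursion gives `⟪B x_{t+1}, x_{t+1}⟫ ≤ 4 λ_max D² / (t + 3)` by induction.
-/

open scoped RealInnerProductSpace

/-- Matrix-vector multiplication producing a vector in Euclidean space. -/
noncomputable def matVec {d : ℕ} (B : Matrix (Fin d) (Fin d) ℝ)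
    (x : EuclideanSpace ℝ (Fin d)) : EuclideanSpace ℝ (Fin d) :=
  WithLp.toLp 2 (fun i => ∑ j, B i j * x j)

lemma matVec_eq_toEuclideanLin {d : ℕ} (B : Matrix (Fin d) (Fin d) ℝ)
    (v : EuclideanSpace ℝ (Fin d)) : matVec B v = Matrix.toEuclideanLin B v := by
  ext i
  simp [matVec, Matrix.toLpLin_apply, Matrix.mulVec, dotProduct]

section InnerProductSpace

variable {E : Type*} [NormedAddCommGroup E] [InnerProductSpace ℝ E]

lemma OrthonormalBasis.inner_map_self_le_iSup_mul_norm_sq {ι : Type*} [Fintype ι]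
    {T : E →ₗ[ℝ] E} (u : OrthonormalBasis ι ℝ E) {μ : ι → ℝ}
    (hu : ∀ i, T (u i) = μ i • u i) (v : E) :
    ⟪T v, v⟫ ≤ (⨆ i, μ i) * ‖v‖ ^ 2 := by
  have hdiag : ⟪T v, v⟫ = ∑ i, μ i * ⟪u i, v⟫ ^ 2 := by
    nth_rewrite 1 [← u.sum_repr' v]
    simp only [map_sum, map_smul, hu, sum_inner, inner_smul_left, RCLike.conj_to_real]
    exact Finset.sum_congr rfl fun i _ => by ring
  rw [hdiag, ← u.sum_sq_inner_right, Finset.mul_sum]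
  gcongr with i
  exact le_ciSup (Set.finite_range μ).bddAbove i

lemma LinearMap.IsPositive.inner_map_add_smul_sub_le {T : E →ₗ[ℝ] E} (hT : T.IsPositive)
    {x s : E} {γ : ℝ} (hγ : 0 ≤ γ) (hs : ⟪T x, s⟫ ≤ 0) :
    ⟪T (x + γ • (s - x)), x + γ • (s - x)⟫ ≤
      (1 - γ) * ⟪T x, x⟫ + γ ^ 2 * ⟪T (s - x), s - x⟫ := by
  have hexpand : ⟪T (x + γ • (s - x)), x + γ • (s - x)⟫ =
      ⟪T x, x⟫ + 2 * γ * ⟪T x, s - x⟫ + γ ^ 2 * ⟪T (s - x), s - x⟫ := by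
    have hsym : ⟪T (s - x), x⟫ = ⟪T x, s - x⟫ := by rw [hT.isSymmetric, real_inner_comm]
    simp only [map_add, map_smul, inner_add_left, inner_add_right, inner_smul_left,
      inner_smul_right, RCLike.conj_to_real, hsym]
    ring
  have hlin : ⟪T x, s - x⟫ ≤ -⟪T x, x⟫ := by
    rw [inner_sub_right]
    linarith
  nlinarith [hT.inner_nonneg_left x]

lemma Convex.mem_of_add_smul_sub_recursion {K : Set E} (hK : Convex ℝ K) {x s : ℕ → E}
    {γ : ℕ → ℝ} (hγ : ∀ t, γ t ∈ Set.Icc 0 1) (hx0 : x 0 ∈ K) (hs : ∀ t, s t ∈ K)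
    (hx : ∀ t, x (t + 1) = x t + γ t • (s t - x t)) : ∀ t, x t ∈ K
  | 0 => hx0
  | t + 1 => hx t ▸ hK.add_smul_sub_mem (hK.mem_of_add_smul_sub_recursion hγ hx0 hs hx t)
      (hs t) (hγ t)

end InnerProductSpace

lemma Matrix.IsHermitian.inner_toEuclideanLin_self_le {n : Type*} [Fintype n] [DecidableEq n]
    {A : Matrix n n ℝ} (hA : A.IsHermitian) (v : EuclideanSpace ℝ n) :
    ⟪A.toEuclideanLin v, v⟫ ≤ (⨆ i, hA.eigenvalues i) * ‖v‖ ^ 2 :=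
  hA.eigenvectorBasis.inner_map_self_le_iSup_mul_norm_sq
    (fun i => by
      ext j
      simpa [Matrix.toLpLin_apply] using congrFun (hA.mulVec_eigenvectorBasis i) j) v

lemma Matrix.PosSemidef.inner_toEuclideanLin_sub_le_mul_diam_sq {n : Type*} [Fintype n]
    [DecidableEq n] {A : Matrix n n ℝ} (hA : A.PosSemidef) {K : Set (EuclideanSpace ℝ n)}
    (hK : Bornology.IsBounded K) {x y : EuclideanSpace ℝ n} (hx : x ∈ K) (hy : y ∈ K) :
    ⟪A.toEuclideanLin (y - x), y - x⟫ ≤ (⨆ i, hA.1.eigenvalues i) * Metric.diam K ^ 2 := by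
  have hdist : ‖y - x‖ ≤ Metric.diam K := by
    rw [← dist_eq_norm]
    exact Metric.dist_le_diam_of_mem hK hy hx
  calc ⟪A.toEuclideanLin (y - x), y - x⟫ ≤ (⨆ i, hA.1.eigenvalues i) * ‖y - x‖ ^ 2 :=
        hA.1.inner_toEuclideanLin_self_le _
    _ ≤ (⨆ i, hA.1.eigenvalues i) * Metric.diam K ^ 2 := by
        gcongr
        exact Real.iSup_nonneg hA.eigenvalues_nonneg

lemma le_four_mul_div_of_frankWolfe_recursion {a : ℕ → ℝ} {C : ℝ} (hC : 0 ≤ C)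
    (ha : ∀ t : ℕ,
      a (t + 1) ≤ (1 - 2 / ((t : ℝ) + 2)) * a t + (2 / ((t : ℝ) + 2)) ^ 2 * C) :
    ∀ t : ℕ, a (t + 1) ≤ 4 * C / ((t : ℝ) + 3)
  | 0 => by norm_num at ha ⊢; linarith [ha 0]
  | t + 1 => by
    have ih := le_four_mul_div_of_frankWolfe_recursion hC ha t
    have hstep := ha (t + 1)
    rw [show ((t + 1 : ℕ) : ℝ) + 2 = t + 3 by push_cast; ring] at hstep
    rw [show ((t + 1 : ℕ) : ℝ) + 3 = t + 3 + 1 by push_cast; ring]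
    have hu : (3 : ℝ) ≤ t + 3 := by linarith [t.cast_nonneg (α := ℝ)]
    generalize (t : ℝ) + 3 = u at ih hstep hu ⊢
    have hγ : 0 ≤ 1 - 2 / u := by rw [sub_nonneg, div_le_one (by positivity)]; linarith
    -- the recursion preserves the bound because `(u - 1) (u + 1) < u ^ 2`
    have hgap : 4 / (u + 1) - ((1 - 2 / u) * (4 / u) + (2 / u) ^ 2) = 4 / (u ^ 2 * (u + 1)) := by
      field_simp
      ring
    calc a (t + 1 + 1) ≤ (1 - 2 / u) * a (t + 1) + (2 / u) ^ 2 * C := hstep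
      _ ≤ (1 - 2 / u) * (4 * C / u) + (2 / u) ^ 2 * C := by gcongr
      _ = ((1 - 2 / u) * (4 / u) + (2 / u) ^ 2) * C := by ring
      _ ≤ 4 / (u + 1) * C := by
          gcongr
          linarith [show 0 ≤ 4 / (u ^ 2 * (u + 1)) by positivity]
      _ = 4 * C / (u + 1) := by ring

theorem fw_rate_general {d : ℕ} (K : Set (EuclideanSpace ℝ (Fin d)))
    (hKcomp : IsCompact K) (hKconv : Convex ℝ K)
    (h0K : (0 : EuclideanSpace ℝ (Fin d)) ∈ K)
    (B : Matrix (Fin d) (Fin d) ℝ) (hB : B.PosSemidef)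
    (x s : ℕ → EuclideanSpace ℝ (Fin d)) (hx0 : x 0 ∈ K)
    (hsK : ∀ t, s t ∈ K)
    (hsmin : ∀ t, ∀ y ∈ K, ⟪matVec B (x t), s t⟫ ≤ ⟪matVec B (x t), y⟫)
    (hupd : ∀ t : ℕ, x (t + 1) = x t + (2 / ((t : ℝ) + 2)) • (s t - x t)) :
    ∀ t : ℕ,
      (1 / 2) * ⟪matVec B (x (t + 1)), x (t + 1)⟫ ≤
        (2 / ((t : ℝ) + 1)) * (⨆ i, hB.1.eigenvalues i) * (Metric.diam K) ^ 2 := by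
  have hT : (Matrix.toEuclideanLin B).IsPositive := Matrix.isPositive_toEuclideanLin_iff.mpr hB
  simp only [matVec_eq_toEuclideanLin] at hsmin ⊢
  have hγ : ∀ t : ℕ, 2 / ((t : ℝ) + 2) ∈ Set.Icc 0 1 := fun t =>
    ⟨by positivity, by rw [div_le_one (by positivity)]; linarith [t.cast_nonneg (α := ℝ)]⟩
  have hxK : ∀ t, x t ∈ K := hKconv.mem_of_add_smul_sub_recursion hγ hx0 hsK hupd
  set C := (⨆ i, hB.1.eigenvalues i) * Metric.diam K ^ 2 with hC_def
  have hC : 0 ≤ C := mul_nonneg (Real.iSup_nonneg hB.eigenvalues_nonneg) (sq_nonneg _)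
  have hdescent : ∀ t : ℕ, ⟪B.toEuclideanLin (x (t + 1)), x (t + 1)⟫ ≤
      (1 - 2 / ((t : ℝ) + 2)) * ⟪B.toEuclideanLin (x t), x t⟫ +
        (2 / ((t : ℝ) + 2)) ^ 2 * C := by
    intro t
    rw [hupd t]
    refine (hT.inner_map_add_smul_sub_le (hγ t).1 ?_).trans ?_
    · simpa using hsmin t 0 h0K
    · gcongr
      exact hB.inner_toEuclideanLin_sub_le_mul_diam_sq hKcomp.isBounded (hxK t) (hsK t)
  intro t
  have ht : (0 : ℝ) ≤ t := t.cast_nonneg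
  calc (1 / 2) * ⟪B.toEuclideanLin (x (t + 1)), x (t + 1)⟫
      ≤ (1 / 2) * (4 * C / ((t : ℝ) + 3)) := by
        gcongr
        exact le_four_mul_div_of_frankWolfe_recursion
          (a := fun t => ⟪B.toEuclideanLin (x t), x t⟫) hC hdescent t
    _ ≤ (1 / 2) * (4 * C / ((t : ℝ) + 1)) := by gcongr; linarith
    _ = (2 / ((t : ℝ) + 1)) * (⨆ i, hB.1.eigenvalues i) * Metric.diam K ^ 2 := by
        rw [hC_def]; ring

/-- Frank–Wolfe convergence rate for `J(x) = ½⟨Bx, x⟩`, `B` symmetric PSD, with step size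
`γ_t = 2/(t+2)`: `J(x_{t+1}) ≤ (2/(t+1)) λ_max(B) diam(K)²`. -/
theorem fw_rate {d : ℕ} [NeZero d] (K : Set (EuclideanSpace ℝ (Fin d)))
    (hKcomp : IsCompact K) (hKconv : Convex ℝ K)
    (h0K : (0 : EuclideanSpace ℝ (Fin d)) ∈ K)
    (B : Matrix (Fin d) (Fin d) ℝ) (hB : B.PosSemidef)
    (x s : ℕ → EuclideanSpace ℝ (Fin d)) (hx0 : x 0 ∈ K)
    (hsK : ∀ t, s t ∈ K)
    (hsmin : ∀ t, ∀ y ∈ K, ⟪matVec B (x t), s t⟫ ≤ ⟪matVec B (x t), y⟫)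
    (hupd : ∀ t : ℕ, x (t + 1) = x t + (2 / ((t : ℝ) + 2)) • (s t - x t)) :
    ∀ t : ℕ,
      (1 / 2) * ⟪matVec B (x (t + 1)), x (t + 1)⟫ ≤
        (2 / ((t : ℝ) + 1)) * (⨆ i, hB.1.eigenvalues i) * (Metric.diam K) ^ 2 :=
  fw_rate_general K hKcomp hKconv h0K B hB x s hx0 hsK hsmin hupd
end

section
/- Let K ⊆ R^d be a compact convex set, v ∈ K, and γ ∈ (0,1). Suppose that for all x, y ∈ K with x ≠ v and y ≠ v, the angle at v between x − v and y − v is strictly less than π/2, i.e., ⟨x − v, y − v⟩ > 0. Then for every x ∈ K and every y ∈ K, ‖(1−γ)x + γy − v‖ ≥ ‖(1−γ)x + γv − v‖ = (1−γ)‖x − v‖. In other words, v is a minimizer of y ↦ ‖(1−γ)x + γy − v‖ over y ∈ K. -/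
open scoped RealInnerProductSpace

section

variable {F : Type*} [NormedAddCommGroup F] [InnerProductSpace ℝ F]

theorem norm_le_norm_add_of_inner_nonneg {a b : F} (h : 0 ≤ ⟪a, b⟫) : ‖a‖ ≤ ‖a + b‖ := by
  have hsq : ‖a‖ ^ 2 ≤ ‖a + b‖ ^ 2 := by
    rw [norm_add_sq_real]
    nlinarith [sq_nonneg ‖b‖]
  exact (pow_le_pow_iff_left₀ (norm_nonneg a) (norm_nonneg _) two_ne_zero).mp hsq

theorem inner_sub_nonneg_of_acute {K : Set F} {v : F}
    (hangle : ∀ x ∈ K, ∀ y ∈ K, x ≠ v → y ≠ v → 0 < ⟪x - v, y - v⟫)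
    {x y : F} (hx : x ∈ K) (hy : y ∈ K) : 0 ≤ ⟪x - v, y - v⟫ := by
  rcases eq_or_ne x v with rfl | hxv
  · simp
  rcases eq_or_ne y v with rfl | hyv
  · simp
  exact (hangle x hx y hy hxv hyv).le

end

theorem cone_condition_general {d : ℕ} (K : Set (EuclideanSpace ℝ (Fin d)))
    (v : EuclideanSpace ℝ (Fin d))
    (γ : ℝ) (hγ : γ ∈ Set.Ioo (0 : ℝ) 1)
    (hangle : ∀ x ∈ K, ∀ y ∈ K, x ≠ v → y ≠ v → 0 < ⟪x - v, y - v⟫) :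
    ∀ x ∈ K, ∀ y ∈ K,
      ‖(1 - γ) • x + γ • y - v‖ ≥ (1 - γ) * ‖x - v‖ ∧
      ‖(1 - γ) • x + γ • v - v‖ = (1 - γ) * ‖x - v‖ := by
  intro x hx y hy
  have hγ₀ : 0 ≤ γ := hγ.1.le
  have hγ₁ : 0 ≤ 1 - γ := sub_nonneg.mpr hγ.2.le
  have hnorm : ‖(1 - γ) • (x - v)‖ = (1 - γ) * ‖x - v‖ := by
    rw [norm_smul, Real.norm_of_nonneg hγ₁]
  have hinner : 0 ≤ ⟪(1 - γ) • (x - v), γ • (y - v)⟫ := by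
    rw [real_inner_smul_left, real_inner_smul_right]
    exact mul_nonneg hγ₁ (mul_nonneg hγ₀ (inner_sub_nonneg_of_acute hangle hx hy))
  constructor
  · calc ‖(1 - γ) • x + γ • y - v‖ = ‖(1 - γ) • (x - v) + γ • (y - v)‖ := by congr 1; module
      _ ≥ ‖(1 - γ) • (x - v)‖ := norm_le_norm_add_of_inner_nonneg hinner
      _ = (1 - γ) * ‖x - v‖ := hnorm
  · rw [← hnorm]
    congr 1
    module

/-- Cone condition: if all angles at `v` between points of `K` are acute, then for every
`x, y ∈ K` and `γ ∈ (0,1)`,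
`‖(1−γ)x + γy − v‖ ≥ ‖(1−γ)x + γv − v‖ = (1−γ)‖x − v‖`, i.e. `v` minimizes
`y ↦ ‖(1−γ)x + γy − v‖` over `K`. -/
theorem cone_condition {d : ℕ} (K : Set (EuclideanSpace ℝ (Fin d)))
    (hKcomp : IsCompact K) (hKconv : Convex ℝ K)
    (v : EuclideanSpace ℝ (Fin d)) (hv : v ∈ K)
    (γ : ℝ) (hγ : γ ∈ Set.Ioo (0 : ℝ) 1)
    (hangle : ∀ x ∈ K, ∀ y ∈ K, x ≠ v → y ≠ v → 0 < ⟪x - v, y - v⟫) :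
    ∀ x ∈ K, ∀ y ∈ K,
      ‖(1 - γ) • x + γ • y - v‖ ≥ (1 - γ) * ‖x - v‖ ∧
      ‖(1 - γ) • x + γ • v - v‖ = (1 - γ) * ‖x - v‖ :=
  cone_condition_general K v γ hγ hangle
end

section
/- Let K = conv{v_1,...,v_κ} ⊆ R^d, fix i, and let η > 0. Suppose x ∈ R^d satisfies ⟨x, v_i − v_j⟩ ≥ η for all j ≠ i. Let τ > 0 and let z ∈ K with ‖z − v_i‖ ≥ τ. Then ⟨x, z⟩ ≤ ⟨x, v_i⟩ − ητ/D, where D = diam(K) (assume D > 0). -/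
/-!
The function `y ↦ ⟪x, y⟫ + (η / D) ‖y - v i‖` is convex, so by the maximum principle its maximum
over `K = conv {v j}` is attained at a vertex. At `v i` it equals `⟪x, v i⟫`; at `v j` with `j ≠ i`
separation gives `⟪x, v j⟫ ≤ ⟪x, v i⟫ - η` and the diameter bound gives `(η / D) ‖v j - v i‖ ≤ η`.
Hence `⟪x, z⟫ + (η / D) ‖z - v i‖ ≤ ⟪x, v i⟫` on `K`, and `‖z - v i‖ ≥ τ` finishes.
-/

open scoped RealInnerProductSpace

open Set Metric

theorem ConvexOn.add_mul_dist_le_of_mem_convexHull {E ι : Type*} [SeminormedAddCommGroup E]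
    [NormedSpace ℝ E] {g : E → ℝ} (hg : ConvexOn ℝ univ g) {v : ι → E} {i : ι} {η D : ℝ}
    (hη : 0 ≤ η) (hD : ∀ j, dist (v j) (v i) ≤ D) (hsep : ∀ j ≠ i, g (v j) + η ≤ g (v i))
    {z : E} (hz : z ∈ convexHull ℝ (range v)) :
    g z + η / D * dist z (v i) ≤ g (v i) := by
  have hD₀ : 0 ≤ D := (dist_self (v i)).symm.le.trans (hD i)
  have hconv : ConvexOn ℝ univ fun y => g y + η / D * dist y (v i) :=
    hg.add ((convexOn_univ_dist (v i)).smul (div_nonneg hη hD₀))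
  obtain ⟨_, ⟨j, rfl⟩, hzj⟩ := hconv.exists_ge_of_mem_convexHull (subset_univ _) hz
  refine hzj.trans ?_
  rcases eq_or_ne j i with rfl | hji
  · simp
  · have hdist : η / D * dist (v j) (v i) ≤ η := calc
      η / D * dist (v j) (v i) = η * (dist (v j) (v i) / D) := by ring
      _ ≤ η * 1 := mul_le_mul_of_nonneg_left (div_le_one_of_le₀ (hD j) hD₀) hη
      _ = η := mul_one η
    linarith [hsep j hji]

theorem separation_geometry_general {d κ : ℕ} (v : Fin κ → EuclideanSpace ℝ (Fin d))
    (K : Set (EuclideanSpace ℝ (Fin d))) (hK : K = convexHull ℝ (Set.range v))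
    (i : Fin κ) (η τ : ℝ) (hη : 0 < η)
    (x : EuclideanSpace ℝ (Fin d)) (hx : ∀ j : Fin κ, j ≠ i → η ≤ ⟪x, v i - v j⟫)
    (z : EuclideanSpace ℝ (Fin d)) (hz : z ∈ K) (hzfar : τ ≤ ‖z - v i‖) :
    ⟪x, z⟫ ≤ ⟪x, v i⟫ - η * τ / Metric.diam K := by
  have hKb : Bornology.IsBounded K := hK ▸ isBounded_convexHull.2 (finite_range v).isBounded
  have hvK : ∀ j, v j ∈ K := fun j => hK ▸ subset_convexHull ℝ _ (mem_range_self j)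
  have hinner : ConvexOn ℝ univ fun y => ⟪x, y⟫ := (innerSL ℝ x).toLinearMap.convexOn convex_univ
  have hbound : ⟪x, z⟫ + η / diam K * dist z (v i) ≤ ⟪x, v i⟫ :=
    hinner.add_mul_dist_le_of_mem_convexHull hη.le
      (fun j => dist_le_diam_of_mem hKb (hvK j) (hvK i))
      (fun j hj => by linarith [inner_sub_right (𝕜 := ℝ) x (v i) (v j), hx j hj]) (hK ▸ hz)
  have hscaled : η * τ / diam K ≤ η / diam K * dist z (v i) := by
    rw [mul_div_right_comm, dist_eq_norm]
    exact mul_le_mul_of_nonneg_left hzfar (div_nonneg hη.le diam_nonneg)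
  linarith

/-- If `⟨x, v_i − v_j⟩ ≥ η` for all `j ≠ i` and `z ∈ K = conv{v_1,…,v_κ}` with
`‖z − v_i‖ ≥ τ`, then `⟨x, z⟩ ≤ ⟨x, v_i⟩ − ητ/D` where `D = diam K > 0`. -/
theorem separation_geometry {d κ : ℕ} (v : Fin κ → EuclideanSpace ℝ (Fin d))
    (K : Set (EuclideanSpace ℝ (Fin d))) (hK : K = convexHull ℝ (Set.range v))
    (i : Fin κ) (η τ : ℝ) (hη : 0 < η) (hτ : 0 < τ)
    (hD : 0 < Metric.diam K)
    (x : EuclideanSpace ℝ (Fin d)) (hx : ∀ j : Fin κ, j ≠ i → η ≤ ⟪x, v i - v j⟫)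
    (z : EuclideanSpace ℝ (Fin d)) (hz : z ∈ K) (hzfar : τ ≤ ‖z - v i‖) :
    ⟪x, z⟫ ≤ ⟪x, v i⟫ - η * τ / Metric.diam K :=
  separation_geometry_general v K hK i η τ hη x hx z hz hzfar
end
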